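/- Let μ̃ be a probability measure on ℤ such that the random walk p̃(k,l) = μ̃(l−k) on ℤ is irreducible, and let φ(c) = ∑_{n∈ℤ} μ̃(n)e^{cn}. If there exists c₀ ≠ 0 with φ(c₀) = 1, then the positive p̃-harmonic functions f on ℤ with f(0) = 1 are precisely the functions f(m) = t + (1−t)e^{c₀ m} with t ∈ [0,1]. If c = 0 is the only real solution of φ(c) = 1, then every positive p̃-harmonic function on ℤ is constant. -/

import Mathlib

open Filter Topology ENNReal

/-! ### Generic Markov chain notions -/

/-- `p` is a transition matrix: nonnegative entries, rows summing to `1`. -/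
def IsTransMat {X : Type*} (p : X → X → ℝ) : Prop :=
  (∀ x y, 0 ≤ p x y) ∧ ∀ x, HasSum (fun y => p x y) 1

open Classical in
/-- `n`-step transition probabilities. -/
noncomputable def pstep {X : Type*} (p : X → X → ℝ) : ℕ → X → X → ℝ
  | 0, x, y => if x = y then 1 else 0
  | n + 1, x, y => ∑' z, pstep p n x z * p z y

/-- Irreducibility: any state can be reached from any state. -/
def IsIrredMat {X : Type*} (p : X → X → ℝ) : Prop :=
  ∀ x y, ∃ n : ℕ, 0 < pstep p n x y

/-- Green kernel, valued in `[0,∞]`. -/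
noncomputable def Green {X : Type*} (p : X → X → ℝ) (x y : X) : ℝ≥0∞ :=
  ∑' n : ℕ, ENNReal.ofReal (pstep p n x y)

/-- Transience: the Green kernel is everywhere finite. -/
def IsTransient {X : Type*} (p : X → X → ℝ) : Prop :=
  ∀ x y, Green p x y ≠ ⊤

/-- Martin kernel with respect to a root `o`. -/
noncomputable def Martin {X : Type*} (p : X → X → ℝ) (o x y : X) : ℝ :=
  (Green p x y).toReal / (Green p o y).toReal

/-- Harmonic function: `∑_y p(x,y) h(y)` converges (absolutely) to `h(x)` for all `x`. -/
def IsHarmonic {X : Type*} (p : X → X → ℝ) (h : X → ℝ) : Prop :=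
  ∀ x, HasSum (fun y => p x y * h y) (h x)

/-- Minimal positive harmonic function, normalized at the root `o`. -/
def IsMinimalHarmonic {X : Type*} (p : X → X → ℝ) (o : X) (h : X → ℝ) : Prop :=
  IsHarmonic p h ∧ (∀ x, 0 < h x) ∧ h o = 1 ∧
    ∀ h₁ : X → ℝ, IsHarmonic p h₁ → (∀ x, 0 < h₁ x) → (∀ x, h₁ x ≤ h x) →
      ∃ c : ℝ, ∀ x, h₁ x = c * h x

/-!
Harnack's inequality bounds the normalized positive harmonic functions pointwise, so their set `H`
has compact closure in `ℤ → ℝ`. A maximizer `g` of `h ↦ h d` on this closure satisfies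
`g (k + d) = g d * g k`, first for `μ k > 0` by comparing the harmonic expansions at `0` and `d`,
then for all `k` by irreducibility. The maximizers for `d = 1` and `d = -1` therefore dominate every
`f ∈ H` on the two half-lines and have finite `μ`-averages, so dominated convergence shows that `H`
is closed, hence a compact convex set. Splitting off one term of the harmonic expansion shows that
its extreme points are multiplicative, i.e. `m ↦ exp (c * m)` with `φ c = 1`, and Krein–Milman
makes `H` the closed convex hull of these exponentials. As `φ` is strictly convex, `φ c = 1` has
at most the two solutions `0` and `c₀`.
-/

open Real

theorem mem_segment_one_iff {ι : Type*} {y f : ι → ℝ} :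
    f ∈ segment ℝ 1 y ↔ ∃ t ∈ Set.Icc (0 : ℝ) 1, ∀ m, f m = t + (1 - t) * y m := by
  constructor
  · rintro ⟨a, b, ha, hb, hab, rfl⟩
    exact ⟨a, ⟨ha, by linarith⟩, fun m => by simp [eq_sub_of_add_eq' hab]⟩
  · rintro ⟨t, ⟨ht0, ht1⟩, hf⟩
    exact ⟨t, 1 - t, ht0, sub_nonneg.2 ht1, by ring, funext fun m => by simp [hf]⟩

theorem eq_exp_of_map_add {e : ℤ → ℝ} (he : ∀ k m, e (k + m) = e k * e m) (h0 : e 0 = 1)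
    (h1 : 0 < e 1) (m : ℤ) : e m = exp (log (e 1) * m) := by
  let ψ : AddChar ℤ ℝ := ⟨e, h0, he⟩
  calc e m = ψ (m • 1) := by rw [smul_eq_mul, mul_one]; rfl
    _ = e 1 ^ (m : ℝ) := by rw [ψ.map_zsmul_eq_zpow, Real.rpow_intCast]; rfl
    _ = exp (log (e 1) * m) := Real.rpow_def_of_pos h1 _

section Kernel

variable {X : Type*} {p : X → X → ℝ}

theorem IsHarmonic.add {f g : X → ℝ} (hf : IsHarmonic p f) (hg : IsHarmonic p g) :
    IsHarmonic p (f + g) := fun x => by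
  simpa only [Pi.add_apply, mul_add] using (hf x).add (hg x)

theorem IsHarmonic.sub {f g : X → ℝ} (hf : IsHarmonic p f) (hg : IsHarmonic p g) :
    IsHarmonic p (f - g) := fun x => by
  simpa only [Pi.sub_apply, mul_sub] using (hf x).sub (hg x)

theorem IsHarmonic.const_smul {f : X → ℝ} (hf : IsHarmonic p f) (c : ℝ) :
    IsHarmonic p (c • f) := fun x => by
  simpa only [Pi.smul_apply, smul_eq_mul, mul_left_comm] using (hf x).mul_left c

theorem pstep_nonneg (hp : ∀ x y, 0 ≤ p x y) : ∀ n x y, 0 ≤ pstep p n x y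
  | 0, x, y => by unfold pstep; split_ifs <;> norm_num
  | n + 1, _, y => tsum_nonneg fun z => mul_nonneg (pstep_nonneg hp n _ z) (hp z y)

theorem exists_pstep_pos_of_pstep_succ_pos (hp : ∀ x y, 0 ≤ p x y) {n : ℕ} {x y : X}
    (h : 0 < pstep p (n + 1) x y) : ∃ z, 0 < pstep p n x z ∧ 0 < p z y := by
  by_contra! hzero
  have hterm : ∀ z, pstep p n x z * p z y = 0 := fun z => by
    rcases (pstep_nonneg hp n x z).eq_or_lt with h0 | hpos
    · rw [← h0, zero_mul]
    · rw [le_antisymm (hzero z hpos) (hp z y), mul_zero]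
  have : pstep p (n + 1) x y = 0 := by simp only [pstep, hterm, tsum_zero]
  exact h.ne' this

theorem hasSum_tsum_mul_mul (hp : ∀ x y, 0 ≤ p x y) {a g h : X → ℝ} {s : ℝ}
    (ha : ∀ z, 0 ≤ a z) (hg : ∀ y, 0 ≤ g y) (hgh : ∀ z, HasSum (fun y => p z y * g y) (h z))
    (hah : HasSum (fun z => a z * h z) s) :
    HasSum (fun y => (∑' z, a z * p z y) * g y) s := by
  set F : X × X → ℝ := fun q => a q.1 * p q.1 q.2 * g q.2
  have hrow : ∀ z, HasSum (fun y => F (z, y)) (a z * h z) := fun z => by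
    simpa only [F, mul_assoc] using (hgh z).mul_left (a z)
  have hF : HasSum F s := by
    have hsum : Summable F := (summable_prod_of_nonneg fun q =>
      mul_nonneg (mul_nonneg (ha _) (hp _ _)) (hg _)).2
        ⟨fun z => (hrow z).summable, hah.summable.congr fun z => (hrow z).tsum_eq.symm⟩
    rw [← hah.tsum_eq, ← funext fun z => (hrow z).tsum_eq, ← hsum.tsum_prod]
    exact hsum.hasSum
  have hswap : HasSum (fun q : X × X => F q.swap) s := (Equiv.prodComm X X).hasSum_iff.2 hF
  refine hswap.prod_fiberwise fun y => ?_
  rw [← tsum_mul_right]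
  exact (hswap.summable.prod_factor y).hasSum

theorem IsHarmonic.hasSum_pstep_mul (hp : ∀ x y, 0 ≤ p x y) {f : X → ℝ} (hf : IsHarmonic p f)
    (hf0 : ∀ x, 0 ≤ f x) : ∀ n x, HasSum (fun y => pstep p n x y * f y) (f x)
  | 0, x => by
    simpa [pstep] using hasSum_single (f := fun y => pstep p 0 x y * f y) x fun y hy => by
      simp [pstep, Ne.symm hy]
  | n + 1, x =>
    hasSum_tsum_mul_mul hp (pstep_nonneg hp n x) hf0 hf (hf.hasSum_pstep_mul hp hf0 n x)

theorem IsHarmonic.pstep_mul_le (hp : ∀ x y, 0 ≤ p x y) {f : X → ℝ} (hf : IsHarmonic p f)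
    (hf0 : ∀ x, 0 ≤ f x) (n : ℕ) (x y : X) : pstep p n x y * f y ≤ f x :=
  le_hasSum (hf.hasSum_pstep_mul hp hf0 n x) y fun z _ =>
    mul_nonneg (pstep_nonneg hp n x z) (hf0 z)

theorem IsHarmonic.pos_of_irred (hp : ∀ x y, 0 ≤ p x y) (hirr : IsIrredMat p) {f : X → ℝ}
    (hf : IsHarmonic p f) (hf0 : ∀ x, 0 ≤ f x) {o : X} (ho : 0 < f o) (x : X) : 0 < f x := by
  obtain ⟨n, hn⟩ := hirr x o
  exact (mul_pos hn ho).trans_le (hf.pstep_mul_le hp hf0 n x o)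

theorem IsHarmonic.eq_zero_of_irred (hp : ∀ x y, 0 ≤ p x y) (hirr : IsIrredMat p) {f : X → ℝ}
    (hf : IsHarmonic p f) (hf0 : ∀ x, 0 ≤ f x) {o : X} (ho : f o = 0) (x : X) : f x = 0 := by
  obtain ⟨n, hn⟩ := hirr o x
  have := hf.pstep_mul_le hp hf0 n o x
  rw [ho] at this
  exact le_antisymm (nonpos_of_mul_nonpos_right this hn) (hf0 x)

end Kernel

section RandomWalk

abbrev randomWalk (μ : ℤ → ℝ) : ℤ → ℤ → ℝ := fun k l => μ (l - k)

variable {μ : ℤ → ℝ}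

theorem isHarmonic_randomWalk_iff {f : ℤ → ℝ} :
    IsHarmonic (randomWalk μ) f ↔ ∀ x, HasSum (fun n => μ n * f (x + n)) (f x) := by
  refine forall_congr' fun x => ?_
  rw [← (Equiv.addLeft x).hasSum_iff]
  simp [randomWalk, Function.comp_def]

theorem IsHarmonic.comp_add_left {f : ℤ → ℝ} (hf : IsHarmonic (randomWalk μ) f) (k : ℤ) :
    IsHarmonic (randomWalk μ) (fun m => f (k + m)) :=
  isHarmonic_randomWalk_iff.2 fun x => by
    simpa only [add_assoc] using isHarmonic_randomWalk_iff.1 hf (k + x)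

theorem randomWalk_induction (hμ0 : ∀ n, 0 ≤ μ n) (hirr : IsIrredMat (randomWalk μ))
    {Q : ℤ → Prop} (zero : Q 0) (add : ∀ a b, Q a → Q b → Q (a + b))
    (support : ∀ k, 0 < μ k → Q k) (k : ℤ) : Q k := by
  obtain ⟨n, hn⟩ := hirr 0 k
  induction n generalizing k with
  | zero =>
    unfold pstep at hn
    split_ifs at hn with h
    · exact h ▸ zero
    · exact absurd hn (lt_irrefl 0)
  | succ n ih =>
    obtain ⟨z, hz, hzk⟩ := exists_pstep_pos_of_pstep_succ_pos (fun _ _ => hμ0 _) hn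
    simpa using add z (k - z) (ih z hz) (support _ hzk)

theorem exists_ne_zero_pos (hμ0 : ∀ n, 0 ≤ μ n) (hirr : IsIrredMat (randomWalk μ)) :
    ∃ n ≠ 0, 0 < μ n := by
  by_contra! h
  exact one_ne_zero <| randomWalk_induction hμ0 hirr (Q := fun k => k = 0) rfl
    (fun a b ha hb => by rw [ha, hb, add_zero])
    (fun k hk => by_contra fun hk0 => (h k hk0).not_gt hk) 1

end RandomWalk

section MomentGeneratingFunction

variable {μ : ℤ → ℝ}

theorem mul_exp_convex_comb_le (hμ0 : ∀ n, 0 ≤ μ n) {x y a b : ℝ} (ha : 0 ≤ a) (hb : 0 ≤ b)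
    (hab : a + b = 1) (n : ℤ) :
    μ n * exp ((a * x + b * y) * n) ≤ a * (μ n * exp (x * n)) + b * (μ n * exp (y * n)) := by
  have h := convexOn_exp.2 (Set.mem_univ (x * n)) (Set.mem_univ (y * n)) ha hb hab
  simp only [smul_eq_mul] at h
  calc μ n * exp ((a * x + b * y) * n) = μ n * exp (a * (x * n) + b * (y * n)) := by ring_nf
    _ ≤ μ n * (a * exp (x * n) + b * exp (y * n)) := mul_le_mul_of_nonneg_left h (hμ0 n)
    _ = _ := by ring

theorem strictConvexOn_tsum_mul_exp (hμ0 : ∀ n, 0 ≤ μ n) (hsupp : ∃ n ≠ 0, 0 < μ n) :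
    StrictConvexOn ℝ {c | Summable fun n : ℤ => μ n * exp (c * n)}
      (fun c => ∑' n : ℤ, μ n * exp (c * n)) := by
  have hmid : ∀ ⦃x y a b : ℝ⦄, Summable (fun n : ℤ => μ n * exp (x * n)) →
      Summable (fun n : ℤ => μ n * exp (y * n)) → 0 ≤ a → 0 ≤ b → a + b = 1 →
      Summable fun n : ℤ => μ n * exp ((a * x + b * y) * n) :=
    fun x y a b hx hy ha hb hab => .of_nonneg_of_le (fun n => mul_nonneg (hμ0 n) (exp_pos _).le)
      (mul_exp_convex_comb_le hμ0 ha hb hab) ((hx.mul_left a).add (hy.mul_left b))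
  refine ⟨fun x hx y hy a b ha hb hab => hmid hx hy ha hb hab,
    fun x hx y hy hxy a b ha hb hab => ?_⟩
  obtain ⟨n₀, hn₀, hμn₀⟩ := hsupp
  have hstrict : μ n₀ * exp ((a * x + b * y) * n₀)
      < a * (μ n₀ * exp (x * n₀)) + b * (μ n₀ * exp (y * n₀)) := by
    have hne : x * n₀ ≠ y * n₀ := fun h => hxy (mul_right_cancel₀ (Int.cast_ne_zero.2 hn₀) h)
    have h := strictConvexOn_exp.2 (Set.mem_univ _) (Set.mem_univ _) hne ha hb hab
    simp only [smul_eq_mul] at h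
    calc μ n₀ * exp ((a * x + b * y) * n₀) = μ n₀ * exp (a * (x * n₀) + b * (y * n₀)) := by
          ring_nf
      _ < μ n₀ * (a * exp (x * n₀) + b * exp (y * n₀)) := mul_lt_mul_of_pos_left h hμn₀
      _ = _ := by ring
  have hlt := Summable.tsum_lt_tsum (mul_exp_convex_comb_le hμ0 ha.le hb.le hab) hstrict
    (hmid hx hy ha.le hb.le hab) ((hx.mul_left a).add (hy.mul_left b))
  simp only [smul_eq_mul]
  rwa [Summable.tsum_add (hx.mul_left a) (hy.mul_left b), tsum_mul_left, tsum_mul_left] at hlt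

theorem eq_or_eq_of_hasSum_mul_exp (hμ0 : ∀ n, 0 ≤ μ n) (hsupp : ∃ n ≠ 0, 0 < μ n)
    {a b c : ℝ} (hab : a ≠ b) (ha : HasSum (fun n : ℤ => μ n * exp (a * n)) 1)
    (hb : HasSum (fun n : ℤ => μ n * exp (b * n)) 1)
    (hc : HasSum (fun n : ℤ => μ n * exp (c * n)) 1) : c = a ∨ c = b := by
  by_contra! h
  have hφ := strictConvexOn_tsum_mul_exp hμ0 hsupp
  have key : ∀ {x y : ℝ}, HasSum (fun n : ℤ => μ n * exp (x * n)) 1 →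
      HasSum (fun n : ℤ => μ n * exp (y * n)) 1 → x ≠ a → y ≠ a → x < y → False :=
    fun hx hy hxa hya hxy => by
      have := hφ.secant_strict_mono ha.summable hx.summable hy.summable hxa hya hxy
      simp only [hx.tsum_eq, hy.tsum_eq, ha.tsum_eq, sub_self, zero_div] at this
      exact lt_irrefl 0 this
  rcases lt_or_gt_of_ne h.2 with hlt | hlt
  · exact key hc hb h.1 hab.symm hlt
  · exact key hb hc hab.symm h.1 hlt

end MomentGeneratingFunction

section NormalizedHarmonic

def normalizedHarmonic (μ : ℤ → ℝ) : Set (ℤ → ℝ) :=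
  {f | IsHarmonic (randomWalk μ) f ∧ (∀ m, 0 < f m) ∧ f 0 = 1}

noncomputable def normalizedShift (f : ℤ → ℝ) (k : ℤ) : ℤ → ℝ := fun m => f (k + m) / f k

variable {μ : ℤ → ℝ}

theorem mem_normalizedHarmonic_of_isHarmonic (hμ0 : ∀ n, 0 ≤ μ n)
    (hirr : IsIrredMat (randomWalk μ)) {f : ℤ → ℝ} (hf : IsHarmonic (randomWalk μ) f)
    (hf0 : ∀ m, 0 ≤ f m) (h0 : f 0 = 1) : f ∈ normalizedHarmonic μ :=
  ⟨hf, hf.pos_of_irred (fun _ _ => hμ0 _) hirr hf0 (h0 ▸ one_pos), h0⟩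

theorem one_mem_normalizedHarmonic (hμ1 : HasSum μ 1) : 1 ∈ normalizedHarmonic μ :=
  ⟨isHarmonic_randomWalk_iff.2 fun _ => by simpa using hμ1, fun _ => one_pos, rfl⟩

theorem exp_mem_normalizedHarmonic {c : ℝ} (hc : HasSum (fun n : ℤ => μ n * exp (c * n)) 1) :
    (fun m : ℤ => exp (c * m)) ∈ normalizedHarmonic μ := by
  refine ⟨isHarmonic_randomWalk_iff.2 fun x => ?_, fun _ => exp_pos _, by simp⟩
  refine (mul_one (exp (c * x)) ▸ hc.mul_left (exp (c * x))).congr_fun fun n => ?_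
  rw [Int.cast_add, mul_add, exp_add]
  ring

theorem convex_normalizedHarmonic : Convex ℝ (normalizedHarmonic μ) :=
  fun f hf g hg a b ha hb hab => ⟨(hf.1.const_smul a).add (hg.1.const_smul b),
    fun m => by
      simp only [Pi.add_apply, Pi.smul_apply, smul_eq_mul]
      rcases ha.eq_or_lt with rfl | ha'
      · simpa [(zero_add b).symm.trans hab] using hg.2.1 m
      · exact add_pos_of_pos_of_nonneg (mul_pos ha' (hf.2.1 m)) (mul_nonneg hb (hg.2.1 m).le),
    by simp [hf.2.2, hg.2.2, hab]⟩

theorem normalizedShift_mem {f : ℤ → ℝ} (hf : f ∈ normalizedHarmonic μ) (k : ℤ) :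
    normalizedShift f k ∈ normalizedHarmonic μ := by
  refine ⟨?_, fun m => div_pos (hf.2.1 _) (hf.2.1 k), by simp [normalizedShift, (hf.2.1 k).ne']⟩
  convert (hf.1.comp_add_left k).const_smul (f k)⁻¹ using 1
  ext m
  simp [normalizedShift, div_eq_inv_mul]

theorem continuousAt_normalizedShift {f : ℤ → ℝ} {k : ℤ} (hk : f k ≠ 0) :
    ContinuousAt (fun g => normalizedShift g k) f :=
  continuousAt_pi.2 fun m =>
    (continuous_apply (k + m)).continuousAt.div (continuous_apply k).continuousAt hk

variable (hμ0 : ∀ n, 0 ≤ μ n) (hirr : IsIrredMat (randomWalk μ))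
include hμ0 hirr

theorem isCompact_closure_normalizedHarmonic : IsCompact (closure (normalizedHarmonic μ)) := by
  choose N hN using fun m => hirr 0 m
  refine (isCompact_univ_pi fun m => isCompact_Icc (a := 0)
    (b := (pstep (randomWalk μ) (N m) 0 m)⁻¹)).of_isClosed_subset isClosed_closure
    (closure_minimal (fun f hf => Set.mem_univ_pi.2 fun m => ⟨(hf.2.1 m).le, ?_⟩)
      (isClosed_set_pi fun m _ => isClosed_Icc))
  have := hf.1.pstep_mul_le (fun _ _ => hμ0 _) (fun m => (hf.2.1 m).le) (N m) 0 m
  rw [hf.2.2] at this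
  simpa using (le_inv_mul_iff₀ (hN m)).2 this

end NormalizedHarmonic

section Closure

variable {μ : ℤ → ℝ} {h : ℤ → ℝ}

theorem apply_zero_of_mem_closure (hh : h ∈ closure (normalizedHarmonic μ)) : h 0 = 1 := by
  have : closure (normalizedHarmonic μ) ⊆ {h | h 0 = 1} :=
    closure_minimal (fun _ hf => hf.2.2) (isClosed_eq (by fun_prop) (by fun_prop))
  exact this hh

theorem sum_mul_apply_add_le_of_mem_closure (hμ0 : ∀ n, 0 ≤ μ n)
    (hh : h ∈ closure (normalizedHarmonic μ)) (x : ℤ) (s : Finset ℤ) :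
    ∑ n ∈ s, μ n * h (x + n) ≤ h x := by
  have : closure (normalizedHarmonic μ) ⊆ {h | ∑ n ∈ s, μ n * h (x + n) ≤ h x} :=
    closure_minimal (fun f hf => sum_le_hasSum s (fun n _ => mul_nonneg (hμ0 n) (hf.2.1 _).le)
      (isHarmonic_randomWalk_iff.1 hf.1 x)) (isClosed_le (by fun_prop) (by fun_prop))
  exact this hh

variable (hμ0 : ∀ n, 0 ≤ μ n) (hirr : IsIrredMat (randomWalk μ))
include hμ0 hirr

theorem pos_of_mem_closure (hh : h ∈ closure (normalizedHarmonic μ)) (x : ℤ) : 0 < h x := by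
  obtain ⟨n, hn⟩ := hirr x 0
  have : closure (normalizedHarmonic μ) ⊆ {h | pstep (randomWalk μ) n x 0 ≤ h x} :=
    closure_minimal (fun f hf => by
      simpa [hf.2.2] using hf.1.pstep_mul_le (fun _ _ => hμ0 _) (fun m => (hf.2.1 m).le) n x 0)
      (isClosed_le (by fun_prop) (by fun_prop))
  exact hn.trans_le (this hh)

theorem summable_of_mem_closure (hh : h ∈ closure (normalizedHarmonic μ)) (x : ℤ) :
    Summable fun n => μ n * h (x + n) :=
  summable_of_sum_le (fun n => mul_nonneg (hμ0 n) (pos_of_mem_closure hμ0 hirr hh _).le)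
    (sum_mul_apply_add_le_of_mem_closure hμ0 hh x)

theorem normalizedShift_mem_closure (hh : h ∈ closure (normalizedHarmonic μ)) (k : ℤ) :
    normalizedShift h k ∈ closure (normalizedHarmonic μ) :=
  closure_mono (by rintro _ ⟨f, hf, rfl⟩; exact normalizedShift_mem hf k)
    (mem_closure_image (f := fun g => normalizedShift g k)
      (continuousAt_normalizedShift (pos_of_mem_closure hμ0 hirr hh k).ne') hh)

end Closure

section Maximizer

variable {μ : ℤ → ℝ} {d : ℤ} {g : ℤ → ℝ}

theorem apply_add_le_mul_of_isMaxOn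
    (hmax : IsMaxOn (fun h => h d) (closure (normalizedHarmonic μ)) g) {h : ℤ → ℝ}
    (hh : h ∈ closure (normalizedHarmonic μ)) (y : ℤ) : h (y + d) ≤ g d * h y := by
  have : closure (normalizedHarmonic μ) ⊆ {h | h (y + d) ≤ g d * h y} :=
    closure_minimal (fun f hf =>
      (div_le_iff₀ (hf.2.1 y)).1 (hmax (subset_closure (normalizedShift_mem hf y))))
      (isClosed_le (by fun_prop) (by fun_prop))
  exact this hh

variable (hμ0 : ∀ n, 0 ≤ μ n) (hirr : IsIrredMat (randomWalk μ))
  (hg : g ∈ closure (normalizedHarmonic μ))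
  (hmax : IsMaxOn (fun h => h d) (closure (normalizedHarmonic μ)) g)
include hμ0 hg hmax

theorem apply_add_eq_mul_of_isMaxOn_of_pos {k : ℤ} (hk : 0 < μ k) : g (k + d) = g d * g k := by
  -- the nonnegative terms `μ n * (g d * f n - f (n + d))` sum to `g d - f d`, which is `0` at `g`
  have hstep :
      closure (normalizedHarmonic μ) ⊆ {h | μ k * (g d * h k - h (k + d)) ≤ g d - h d} := by
    refine closure_minimal (fun f hf => ?_) (isClosed_le (by fun_prop) (by fun_prop))
    have h0 := isHarmonic_randomWalk_iff.1 hf.1 0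
    simp only [zero_add, hf.2.2] at h0
    have hsum : HasSum (fun n => μ n * (g d * f n - f (n + d))) (g d - f d) := by
      have := (h0.mul_left (g d)).sub (isHarmonic_randomWalk_iff.1 hf.1 d)
      rw [mul_one] at this
      exact this.congr_fun fun n => by rw [add_comm n d]; ring
    exact le_hasSum hsum k fun n _ => mul_nonneg (hμ0 n)
      (sub_nonneg.2 (apply_add_le_mul_of_isMaxOn hmax (subset_closure hf) n))
  have h1 : μ k * (g d * g k - g (k + d)) ≤ 0 := sub_self (g d) ▸ hstep hg
  have h2 := apply_add_le_mul_of_isMaxOn hmax hg k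
  nlinarith

include hirr

theorem isMaxOn_normalizedShift {z : ℤ} (hz : g (z + d) = g d * g z) :
    IsMaxOn (fun h => h d) (closure (normalizedHarmonic μ)) (normalizedShift g z) := by
  intro h hh
  show h d ≤ g (z + d) / g z
  rw [hz, mul_div_cancel_right₀ _ (pos_of_mem_closure hμ0 hirr hg z).ne']
  exact hmax hh

theorem apply_add_eq_mul_of_isMaxOn (k : ℤ) : g (k + d) = g d * g k := by
  suffices ∀ k, ∀ g ∈ closure (normalizedHarmonic μ),
      IsMaxOn (fun h => h d) (closure (normalizedHarmonic μ)) g → g (k + d) = g d * g k from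
    this k g hg hmax
  refine randomWalk_induction hμ0 hirr ?_ ?_ ?_
  · intro g hg _
    rw [zero_add, apply_zero_of_mem_closure hg, mul_one]
  · intro a b ha hb g hg hmax
    have hga := ha g hg hmax
    have hga_pos := pos_of_mem_closure hμ0 hirr hg a
    have := hb _ (normalizedShift_mem_closure hμ0 hirr hg a)
      (isMaxOn_normalizedShift hμ0 hirr hg hmax hga)
    simp only [normalizedShift, hga] at this
    field_simp at this
    rw [add_assoc, this]
  · exact fun k hk g hg hmax => apply_add_eq_mul_of_isMaxOn_of_pos hμ0 hg hmax hk

theorem apply_nsmul_le_of_isMaxOn {f : ℤ → ℝ} (hf : f ∈ normalizedHarmonic μ) (n : ℕ) :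
    f (n • d) ≤ g (n • d) := by
  induction n with
  | zero => simp [hf.2.2, apply_zero_of_mem_closure hg]
  | succ n ih =>
    rw [succ_nsmul, apply_add_eq_mul_of_isMaxOn hμ0 hirr hg hmax]
    exact (apply_add_le_mul_of_isMaxOn hmax (subset_closure hf) _).trans
      (mul_le_mul_of_nonneg_left ih (pos_of_mem_closure hμ0 hirr hg d).le)

end Maximizer

section Compactness

variable {μ : ℤ → ℝ} (hμ0 : ∀ n, 0 ≤ μ n) (hμ1 : HasSum μ 1) (hirr : IsIrredMat (randomWalk μ))
include hμ0 hμ1 hirr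

theorem exists_summable_bound_normalizedHarmonic :
    ∃ D : ℤ → ℝ, (∀ x, Summable fun n => μ n * D (x + n)) ∧
      ∀ f ∈ normalizedHarmonic μ, ∀ m, f m ≤ D m := by
  have hK := isCompact_closure_normalizedHarmonic hμ0 hirr
  have hne : (closure (normalizedHarmonic μ)).Nonempty :=
    ⟨1, subset_closure (one_mem_normalizedHarmonic hμ1)⟩
  obtain ⟨gr, hgr, hmaxr⟩ := hK.exists_isMaxOn hne (continuous_apply (1 : ℤ)).continuousOn
  obtain ⟨gl, hgl, hmaxl⟩ := hK.exists_isMaxOn hne (continuous_apply (-1 : ℤ)).continuousOn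
  -- `gr` dominates every `f` on `ℕ`, and `gl` on `-ℕ`
  refine ⟨gr + gl, fun x => ?_, fun f hf m => ?_⟩
  · simpa only [Pi.add_apply, mul_add] using
      (summable_of_mem_closure hμ0 hirr hgr x).add (summable_of_mem_closure hμ0 hirr hgl x)
  have hr := pos_of_mem_closure hμ0 hirr hgr m
  have hl := pos_of_mem_closure hμ0 hirr hgl m
  obtain ⟨n, rfl | rfl⟩ := Int.eq_nat_or_neg m
  · have := apply_nsmul_le_of_isMaxOn hμ0 hirr hgr hmaxr hf n
    simp only [nsmul_eq_mul, mul_one] at this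
    simp only [Pi.add_apply]
    linarith
  · have := apply_nsmul_le_of_isMaxOn hμ0 hirr hgl hmaxl hf n
    simp only [nsmul_eq_mul, mul_neg, mul_one] at this
    simp only [Pi.add_apply]
    linarith

theorem isClosed_normalizedHarmonic : IsClosed (normalizedHarmonic μ) := by
  obtain ⟨D, hD, hfD⟩ := exists_summable_bound_normalizedHarmonic hμ0 hμ1 hirr
  refine closure_subset_iff_isClosed.1 fun h hh => ⟨isHarmonic_randomWalk_iff.2 fun x => ?_,
    pos_of_mem_closure hμ0 hirr hh, apply_zero_of_mem_closure hh⟩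
  obtain ⟨F, hF, hlim⟩ := mem_closure_iff_seq_limit.1 hh
  have hlim' := tendsto_pi_nhds.1 hlim
  have hDC : Tendsto (fun j => ∑' n, μ n * F j (x + n)) atTop (𝓝 (∑' n, μ n * h (x + n))) :=
    tendsto_tsum_of_dominated_convergence (hD x) (fun n => (hlim' _).const_mul _)
      (Eventually.of_forall fun j n => by
        rw [Real.norm_of_nonneg (mul_nonneg (hμ0 n) ((hF j).2.1 _).le)]
        exact mul_le_mul_of_nonneg_left (hfD _ (hF j) _) (hμ0 n))
  simp only [fun j => (isHarmonic_randomWalk_iff.1 (hF j).1 x).tsum_eq] at hDC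
  rw [tendsto_nhds_unique (hlim' x) hDC]
  exact (summable_of_mem_closure hμ0 hirr hh x).hasSum

theorem isCompact_normalizedHarmonic : IsCompact (normalizedHarmonic μ) :=
  (isClosed_normalizedHarmonic hμ0 hμ1 hirr).closure_eq ▸
    isCompact_closure_normalizedHarmonic hμ0 hirr

end Compactness

section ExtremePoints

variable {μ : ℤ → ℝ} (hμ0 : ∀ n, 0 ≤ μ n) (hirr : IsIrredMat (randomWalk μ)) {e : ℤ → ℝ}
  (he : e ∈ (normalizedHarmonic μ).extremePoints ℝ)
include hμ0 hirr he

theorem apply_add_of_mem_extremePoints_of_pos {k : ℤ} (hk : 0 < μ k) (m : ℤ) :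
    e (k + m) = e k * e m := by
  obtain ⟨⟨heH, hepos, he0⟩, hext⟩ := he
  -- `r` is `e` minus the `k`-th term of its harmonic expansion; unless `r = 0`,
  -- `e` is a proper convex combination of its shift by `k` and of `r` normalized
  set r : ℤ → ℝ := e - μ k • fun m => e (k + m)
  have hr_apply : ∀ m, r m = e m - μ k * e (k + m) := fun _ => rfl
  have hr_harm : IsHarmonic (randomWalk μ) r := heH.sub ((heH.comp_add_left k).const_smul (μ k))
  have hr0 : ∀ m, 0 ≤ r m := fun m => by
    have := le_hasSum (isHarmonic_randomWalk_iff.1 heH m) k fun n _ =>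
      mul_nonneg (hμ0 n) (hepos _).le
    rwa [hr_apply, sub_nonneg, add_comm]
  rcases (hr0 0).eq_or_lt with h0 | h0
  · have hrz := fun m => hr_harm.eq_zero_of_irred (fun _ _ => hμ0 _) hirr hr0 h0.symm m
    have h1 := hrz 0
    have h2 := hrz m
    rw [hr_apply, he0, add_zero, sub_eq_zero] at h1
    rw [hr_apply, sub_eq_zero] at h2
    apply mul_left_cancel₀ hk.ne'
    rw [← h2, ← mul_assoc, ← h1, one_mul]
  · have hu := normalizedShift_mem ⟨heH, hepos, he0⟩ k
    have hv : (r 0)⁻¹ • r ∈ normalizedHarmonic μ :=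
      mem_normalizedHarmonic_of_isHarmonic hμ0 hirr (hr_harm.const_smul _)
        (fun m => mul_nonneg (inv_nonneg.2 h0.le) (hr0 m)) (inv_mul_cancel₀ h0.ne')
    have hw : r 0 = 1 - μ k * e k := by rw [hr_apply, he0, add_zero]
    have hseg : e ∈ openSegment ℝ (normalizedShift e k) ((r 0)⁻¹ • r) := by
      refine ⟨μ k * e k, r 0, mul_pos hk (hepos k), h0, by rw [hw]; ring, funext fun m => ?_⟩
      simp only [Pi.add_apply, Pi.smul_apply, smul_eq_mul, normalizedShift]
      rw [mul_inv_cancel_left₀ h0.ne', hr_apply]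
      field_simp [(hepos k).ne']
      ring
    have := congrFun (hext hu hv hseg) m
    rw [normalizedShift, div_eq_iff (hepos k).ne'] at this
    rw [this, mul_comm]

theorem apply_add_of_mem_extremePoints (k m : ℤ) : e (k + m) = e k * e m := by
  refine randomWalk_induction hμ0 hirr (Q := fun k => ∀ m, e (k + m) = e k * e m)
    (fun m => by rw [zero_add, he.1.2.2, one_mul]) (fun a b ha hb m => ?_)
    (fun k hk => apply_add_of_mem_extremePoints_of_pos hμ0 hirr he hk) k m
  rw [add_assoc, ha, hb, ha b, mul_assoc]

theorem exists_hasSum_of_mem_extremePoints :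
    ∃ c, HasSum (fun n : ℤ => μ n * exp (c * n)) 1 ∧ e = fun m : ℤ => exp (c * m) := by
  have hexp : e = fun m : ℤ => exp (log (e 1) * m) :=
    funext (eq_exp_of_map_add (apply_add_of_mem_extremePoints hμ0 hirr he) he.1.2.2 (he.1.2.1 1))
  refine ⟨log (e 1), ?_, hexp⟩
  have := isHarmonic_randomWalk_iff.1 he.1.1 0
  rw [he.1.2.2, hexp] at this
  simpa using this

end ExtremePoints

section Representation

variable {μ : ℤ → ℝ} (hμ0 : ∀ n, 0 ≤ μ n) (hμ1 : HasSum μ 1) (hirr : IsIrredMat (randomWalk μ))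
include hμ0 hμ1 hirr

theorem normalizedHarmonic_subset_of_exp_mem {S : Set (ℤ → ℝ)} (hS : IsClosed S)
    (hSc : Convex ℝ S)
    (hexp : ∀ c, HasSum (fun n : ℤ => μ n * exp (c * n)) 1 → (fun m : ℤ => exp (c * m)) ∈ S) :
    normalizedHarmonic μ ⊆ S := by
  rw [← closure_convexHull_extremePoints (isCompact_normalizedHarmonic hμ0 hμ1 hirr)
    convex_normalizedHarmonic]
  refine closure_minimal (convexHull_min (fun e he => ?_) hSc) hS
  obtain ⟨c, hc, rfl⟩ := exists_hasSum_of_mem_extremePoints hμ0 hirr he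
  exact hexp c hc

theorem normalizedHarmonic_eq_segment {c₀ : ℝ} (hc₀ : c₀ ≠ 0)
    (hφ : HasSum (fun n : ℤ => μ n * exp (c₀ * n)) 1) :
    normalizedHarmonic μ = segment ℝ 1 (fun m : ℤ => exp (c₀ * m)) := by
  refine subset_antisymm (normalizedHarmonic_subset_of_exp_mem hμ0 hμ1 hirr ?_
    (convex_segment _ _) fun c hc => ?_) (convex_normalizedHarmonic.segment_subset
      (one_mem_normalizedHarmonic hμ1) (exp_mem_normalizedHarmonic hφ))
  · rw [← convexHull_pair]
    exact ((Set.toFinite _).isCompact_convexHull ℝ).isClosed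
  · have hφ0 : HasSum (fun n : ℤ => μ n * exp (0 * n)) 1 := by simpa using hμ1
    rcases eq_or_eq_of_hasSum_mul_exp hμ0 (exists_ne_zero_pos hμ0 hirr) hc₀.symm hφ0 hφ hc
      with rfl | rfl
    · have hexp0 : (fun m : ℤ => exp (0 * m)) = 1 := by ext; simp
      exact hexp0 ▸ left_mem_segment ℝ _ _
    · exact right_mem_segment ℝ _ _

theorem normalizedHarmonic_eq_singleton_one
    (hroots : ∀ c, HasSum (fun n : ℤ => μ n * exp (c * n)) 1 → c = 0) :
    normalizedHarmonic μ = {1} :=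
  subset_antisymm (normalizedHarmonic_subset_of_exp_mem hμ0 hμ1 hirr isClosed_singleton
    (convex_singleton 1) fun c hc => by ext; simp [hroots c hc])
    (Set.singleton_subset_iff.2 (one_mem_normalizedHarmonic hμ1))

end Representation


/-- For an irreducible random walk `p̃(k,l) = μ̃(l-k)` on `ℤ`:
if `φ(c₀) = 1` for some `c₀ ≠ 0`, the normalized positive harmonic functions are
precisely `m ↦ t + (1-t)e^{c₀m}`, `t ∈ [0,1]`; if `c = 0` is the only solution of
`φ(c) = 1`, every positive harmonic function is constant. -/
theorem positive_harmonic_Z (μ : ℤ → ℝ) (hμ0 : ∀ n, 0 ≤ μ n)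
    (hμ1 : HasSum μ 1)
    (hirr : IsIrredMat (fun k l : ℤ => μ (l - k))) :
    (∀ c₀ : ℝ, c₀ ≠ 0 → HasSum (fun n : ℤ => μ n * Real.exp (c₀ * n)) 1 →
      ∀ f : ℤ → ℝ,
        (IsHarmonic (fun k l : ℤ => μ (l - k)) f ∧ (∀ m, 0 < f m) ∧ f 0 = 1) ↔
          (∃ t : ℝ, t ∈ Set.Icc (0 : ℝ) 1 ∧
            ∀ m : ℤ, f m = t + (1 - t) * Real.exp (c₀ * m))) ∧
    ((∀ c : ℝ, HasSum (fun n : ℤ => μ n * Real.exp (c * n)) 1 → c = 0) →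
      ∀ f : ℤ → ℝ, IsHarmonic (fun k l : ℤ => μ (l - k)) f → (∀ m, 0 < f m) →
        ∃ a : ℝ, ∀ m, f m = a) := by
  refine ⟨fun c₀ hc₀ hφ f => ?_, fun hroots f hf hpos => ⟨f 0, fun m => ?_⟩⟩
  · change f ∈ normalizedHarmonic μ ↔ _
    rw [normalizedHarmonic_eq_segment hμ0 hμ1 hirr hc₀ hφ, mem_segment_one_iff]
  · have hnorm : (f 0)⁻¹ • f ∈ normalizedHarmonic μ :=
      ⟨hf.const_smul _, fun m => mul_pos (inv_pos.2 (hpos 0)) (hpos m),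
        inv_mul_cancel₀ (hpos 0).ne'⟩
    rw [normalizedHarmonic_eq_singleton_one hμ0 hμ1 hirr hroots] at hnorm
    have := congrFun hnorm m
    rw [Pi.smul_apply, smul_eq_mul, Pi.one_apply, inv_mul_eq_one₀ (hpos 0).ne'] at this
    exact this.symm
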